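/- Let C₁, C₂, C₃, C₄ be positive constants, α ∈ (0,3), and let p, q satisfy (3+α)/3 ≤ p ≤ q ≤ 3+α. Then the function f(t) = C₁t⁴ + C₂t⁸ − C₃t^{2(p+3+α)} − C₄t^{2(q+3+α)} has a unique critical point on (0,∞), and this critical point is the point where f attains its maximum over (0,∞). -/
import Mathlib


noncomputable section

/-- `f(t) = C₁t⁴ + C₂t⁸ - C₃t^{2(p+3+α)} - C₄t^{2(q+3+α)}`. -/
def auxf (C₁ C₂ C₃ C₄ α p q : ℝ) (t : ℝ) : ℝ :=
  C₁ * t ^ (4 : ℕ) + C₂ * t ^ (8 : ℕ)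
    - C₃ * t ^ (2 * (p + 3 + α)) - C₄ * t ^ (2 * (q + 3 + α))

namespace AuxfAux

/-- Auxiliary function: `f'(t) = t^7 * G t` on `(0,∞)`. -/
def G (c₁ c₂ c₃ c₄ a b t : ℝ) : ℝ :=
  4 * c₁ * t ^ (-4 : ℝ) + 8 * c₂ - a * c₃ * t ^ (a - 8) - b * c₄ * t ^ (b - 8)

lemma hasDerivAt_auxf (C₁ C₂ C₃ C₄ α p q t : ℝ) (ht : 0 < t) :
    HasDerivAt (auxf C₁ C₂ C₃ C₄ α p q)
      (t ^ (7 : ℕ) * G C₁ C₂ C₃ C₄ (2 * (p + 3 + α)) (2 * (q + 3 + α)) t) t := by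
  set a := 2 * (p + 3 + α) with ha
  set b := 2 * (q + 3 + α) with hb
  have h1 : HasDerivAt (fun t : ℝ => C₁ * t ^ (4 : ℕ)) (C₁ * (4 * t ^ (3 : ℕ))) t := by
    simpa using (hasDerivAt_pow 4 t).const_mul C₁
  have h2 : HasDerivAt (fun t : ℝ => C₂ * t ^ (8 : ℕ)) (C₂ * (8 * t ^ (7 : ℕ))) t := by
    simpa using (hasDerivAt_pow 8 t).const_mul C₂
  have h3 : HasDerivAt (fun t : ℝ => C₃ * t ^ a) (C₃ * (a * t ^ (a - 1))) t :=
    (Real.hasDerivAt_rpow_const (Or.inl ht.ne')).const_mul C₃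
  have h4 : HasDerivAt (fun t : ℝ => C₄ * t ^ b) (C₄ * (b * t ^ (b - 1))) t :=
    (Real.hasDerivAt_rpow_const (Or.inl ht.ne')).const_mul C₄
  have h : HasDerivAt (auxf C₁ C₂ C₃ C₄ α p q)
      (C₁ * (4 * t ^ (3 : ℕ)) + C₂ * (8 * t ^ (7 : ℕ))
        - C₃ * (a * t ^ (a - 1)) - C₄ * (b * t ^ (b - 1))) t := by
    exact ((h1.add h2).sub h3).sub h4
  convert h using 1
  have hmul : ∀ e : ℝ, t ^ (7 : ℕ) * t ^ e = t ^ ((7 : ℝ) + e) := fun e => by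
    rw [← Real.rpow_natCast t 7, ← Real.rpow_add ht]
    norm_num
  have e1 : t ^ (7 : ℕ) * t ^ (-4 : ℝ) = t ^ (3 : ℕ) := by
    rw [hmul, show (7 : ℝ) + -4 = ((3 : ℕ) : ℝ) by norm_num, Real.rpow_natCast]
  have e2 : t ^ (7 : ℕ) * t ^ (a - 8) = t ^ (a - 1) := by
    rw [hmul, show (7 : ℝ) + (a - 8) = a - 1 by ring]
  have e3 : t ^ (7 : ℕ) * t ^ (b - 8) = t ^ (b - 1) := by
    rw [hmul, show (7 : ℝ) + (b - 8) = b - 1 by ring]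
  have expand : t ^ (7 : ℕ) * G C₁ C₂ C₃ C₄ a b t
      = 4 * C₁ * (t ^ (7 : ℕ) * t ^ (-4 : ℝ)) + 8 * C₂ * t ^ (7 : ℕ)
        - a * C₃ * (t ^ (7 : ℕ) * t ^ (a - 8)) - b * C₄ * (t ^ (7 : ℕ) * t ^ (b - 8)) := by
    unfold G; ring
  rw [expand, e1, e2, e3]; ring

lemma G_strictAnti {c₁ c₂ c₃ c₄ a b : ℝ} (hc₁ : 0 < c₁) (hc₃ : 0 < c₃) (hc₄ : 0 < c₄)
    (ha : 8 < a) (hb : 8 < b) {x y : ℝ} (hx : 0 < x) (hxy : x < y) :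
    G c₁ c₂ c₃ c₄ a b y < G c₁ c₂ c₃ c₄ a b x := by
  have h1 : y ^ (-4 : ℝ) < x ^ (-4 : ℝ) := Real.rpow_lt_rpow_of_neg hx hxy (by norm_num)
  have h2 : x ^ (a - 8) < y ^ (a - 8) := Real.rpow_lt_rpow hx.le hxy (by linarith)
  have h3 : x ^ (b - 8) < y ^ (b - 8) := Real.rpow_lt_rpow hx.le hxy (by linarith)
  have h1' : 4 * c₁ * y ^ (-4 : ℝ) < 4 * c₁ * x ^ (-4 : ℝ) :=
    mul_lt_mul_of_pos_left h1 (by linarith)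
  have h2' : a * c₃ * x ^ (a - 8) < a * c₃ * y ^ (a - 8) :=
    mul_lt_mul_of_pos_left h2 (mul_pos (by linarith) hc₃)
  have h3' : b * c₄ * x ^ (b - 8) < b * c₄ * y ^ (b - 8) :=
    mul_lt_mul_of_pos_left h3 (mul_pos (by linarith) hc₄)
  unfold G; linarith

lemma exists_G_pos {c₁ c₂ c₃ c₄ a b : ℝ} (hc₁ : 0 < c₁) (hc₂ : 0 < c₂) (hc₃ : 0 < c₃)
    (hc₄ : 0 < c₄) (ha : 8 < a) (hb : 8 < b) :
    ∃ s : ℝ, 0 < s ∧ s < 1 ∧ 0 < G c₁ c₂ c₃ c₄ a b s := by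
  set M : ℝ := a * c₃ + b * c₄ with hM
  have hMpos : 0 < M := by
    have := mul_pos (show (0:ℝ) < a by linarith) hc₃
    have := mul_pos (show (0:ℝ) < b by linarith) hc₄
    linarith
  have hr : (0 : ℝ) < (4 * c₁ / M) ^ ((4 : ℝ)⁻¹) :=
    Real.rpow_pos_of_pos (by positivity) _
  set s : ℝ := (1 / 2) * min 1 ((4 * c₁ / M) ^ ((4 : ℝ)⁻¹)) with hs
  have hspos : 0 < s := mul_pos (by norm_num) (lt_min one_pos hr)
  have hs1 : s < 1 := by
    have : s ≤ (1 / 2) * 1 := by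
      rw [hs]
      have := min_le_left (1 : ℝ) ((4 * c₁ / M) ^ ((4 : ℝ)⁻¹))
      nlinarith
    linarith
  have hs4 : s ^ (4 : ℕ) < 4 * c₁ / M := by
    have h1 : s ≤ (1 / 2) * ((4 * c₁ / M) ^ ((4 : ℝ)⁻¹)) := by
      rw [hs]
      have := min_le_right (1 : ℝ) ((4 * c₁ / M) ^ ((4 : ℝ)⁻¹))
      nlinarith
    have h2 : s ^ (4 : ℕ) ≤ ((1 / 2) * ((4 * c₁ / M) ^ ((4 : ℝ)⁻¹))) ^ (4 : ℕ) :=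
      pow_le_pow_left₀ hspos.le h1 4
    have h3 : ((1 / 2) * ((4 * c₁ / M) ^ ((4 : ℝ)⁻¹))) ^ (4 : ℕ)
        = (1 / 16) * (4 * c₁ / M) := by
      have hkey : ((4 * c₁ / M) ^ ((4 : ℝ)⁻¹)) ^ (4 : ℕ) = 4 * c₁ / M := by
        rw [show ((4 : ℝ)⁻¹) = (((4 : ℕ) : ℝ))⁻¹ by norm_num]
        exact Real.rpow_inv_natCast_pow (by positivity) (by norm_num)
      rw [mul_pow, hkey]
      norm_num
    have h4 : (0 : ℝ) < 4 * c₁ / M := by positivity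
    rw [h3] at h2; linarith
  have hneg4 : s ^ (-4 : ℝ) = (s ^ (4 : ℕ))⁻¹ := by
    rw [show (-4 : ℝ) = -((4:ℕ) : ℝ) by norm_num, Real.rpow_neg hspos.le,
      Real.rpow_natCast]
  have hpow4 : (0 : ℝ) < s ^ (4 : ℕ) := pow_pos hspos 4
  have hbig : M < 4 * c₁ * s ^ (-4 : ℝ) := by
    have h5 : M * s ^ (4 : ℕ) < 4 * c₁ := by
      have := (lt_div_iff₀ hMpos).mp hs4
      linarith
    have h6 : M < 4 * c₁ / s ^ (4 : ℕ) := (lt_div_iff₀ hpow4).mpr h5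
    rw [div_eq_mul_inv] at h6
    rw [hneg4]; exact h6
  refine ⟨s, hspos, hs1, ?_⟩
  have hsa : s ^ (a - 8) ≤ 1 := Real.rpow_le_one hspos.le hs1.le (by linarith)
  have hsb : s ^ (b - 8) ≤ 1 := Real.rpow_le_one hspos.le hs1.le (by linarith)
  have h7 : a * c₃ * s ^ (a - 8) ≤ a * c₃ :=
    mul_le_of_le_one_right (mul_pos (by linarith) hc₃).le hsa
  have h8 : b * c₄ * s ^ (b - 8) ≤ b * c₄ :=
    mul_le_of_le_one_right (mul_pos (by linarith) hc₄).le hsb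
  unfold G; linarith

lemma exists_G_neg {c₁ c₂ c₃ c₄ a b : ℝ} (hc₁ : 0 < c₁) (hc₂ : 0 < c₂) (hc₃ : 0 < c₃)
    (hc₄ : 0 < c₄) (ha : 8 < a) (hb : 8 < b) :
    ∃ T : ℝ, 1 ≤ T ∧ G c₁ c₂ c₃ c₄ a b T < 0 := by
  have hac₃ : 0 < a * c₃ := mul_pos (by linarith) hc₃
  set Y : ℝ := 2 * (4 * c₁ + 8 * c₂) / (a * c₃) with hY
  have hYpos : 0 < Y := div_pos (by linarith) hac₃
  have ha8 : (0 : ℝ) < a - 8 := by linarith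
  refine ⟨max 1 (Y ^ (a - 8)⁻¹), le_max_left _ _, ?_⟩
  set T := max 1 (Y ^ (a - 8)⁻¹) with hT
  have hT1 : (1 : ℝ) ≤ T := le_max_left _ _
  have hTY : Y ≤ T ^ (a - 8) := by
    calc Y = (Y ^ (a - 8)⁻¹) ^ (a - 8) := (Real.rpow_inv_rpow hYpos.le ha8.ne').symm
    _ ≤ T ^ (a - 8) :=
        Real.rpow_le_rpow (Real.rpow_nonneg hYpos.le _) (le_max_right _ _) ha8.le
  have h1 : 2 * (4 * c₁ + 8 * c₂) ≤ a * c₃ * T ^ (a - 8) := by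
    have h1a : a * c₃ * Y = 2 * (4 * c₁ + 8 * c₂) := by
      rw [hY]; field_simp
    have := mul_le_mul_of_nonneg_left hTY hac₃.le
    linarith
  have h2 : T ^ (-4 : ℝ) ≤ 1 := Real.rpow_le_one_of_one_le_of_nonpos hT1 (by norm_num)
  have h3 : 0 ≤ b * c₄ * T ^ (b - 8) := by
    have := Real.rpow_nonneg (le_trans zero_le_one hT1) (b - 8)
    have := mul_pos (show (0:ℝ) < b by linarith) hc₄
    nlinarith
  have h4 : 4 * c₁ * T ^ (-4 : ℝ) ≤ 4 * c₁ := by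
    have := mul_le_mul_of_nonneg_left h2 (show (0:ℝ) ≤ 4 * c₁ by linarith)
    linarith
  unfold G; linarith

end AuxfAux

open AuxfAux in
/-- **Uniqueness of the critical point of the fibering map:** `f` has a unique
critical point on `(0,∞)`, and it is the point where `f` attains its maximum
over `(0,∞)`. -/
theorem auxf_unique_critical_point
    (C₁ C₂ C₃ C₄ α p q : ℝ)
    (hC₁ : 0 < C₁) (hC₂ : 0 < C₂) (hC₃ : 0 < C₃) (hC₄ : 0 < C₄)
    (hα : 0 < α ∧ α < 3)
    (hp : (3 + α) / 3 ≤ p) (hpq : p ≤ q) (hq : q ≤ 3 + α) :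
    ∃ t : ℝ, 0 < t ∧
      deriv (auxf C₁ C₂ C₃ C₄ α p q) t = 0 ∧
      (∀ s : ℝ, 0 < s → deriv (auxf C₁ C₂ C₃ C₄ α p q) s = 0 → s = t) ∧
      (∀ s : ℝ, 0 < s → auxf C₁ C₂ C₃ C₄ α p q s ≤ auxf C₁ C₂ C₃ C₄ α p q t) := by
  obtain ⟨hα0, hα3⟩ := hα
  set a := 2 * (p + 3 + α) with ha_def
  set b := 2 * (q + 3 + α) with hb_def
  have ha : 8 < a := by
    have : (3 + α) / 3 ≤ p := hp
    have h1 : 3 + α ≤ 3 * p := by linarith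
    rw [ha_def]; linarith
  have hb : 8 < b := by rw [hb_def]; rw [ha_def] at ha; linarith
  set f := auxf C₁ C₂ C₃ C₄ α p q with hf
  set g := G C₁ C₂ C₃ C₄ a b with hg
  -- derivative formula
  have hderiv : ∀ t : ℝ, 0 < t → deriv f t = t ^ (7 : ℕ) * g t := fun t ht =>
    (hasDerivAt_auxf C₁ C₂ C₃ C₄ α p q t ht).deriv
  -- existence of a zero of g via IVT
  obtain ⟨s₀, hs₀pos, hs₀1, hgs₀⟩ := exists_G_pos hC₁ hC₂ hC₃ hC₄ ha hb (c₂ := C₂)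
  obtain ⟨T₀, hT₀1, hgT₀⟩ := exists_G_neg hC₁ hC₂ hC₃ hC₄ ha hb (c₂ := C₂)
  have hsT : s₀ ≤ T₀ := le_trans hs₀1.le hT₀1
  have hcontg : ContinuousOn g (Set.Icc s₀ T₀) := by
    have hne : ∀ x ∈ Set.Icc s₀ T₀, x ≠ 0 := fun x hx =>
      (lt_of_lt_of_le hs₀pos hx.1).ne'
    rw [hg]; unfold G
    refine ((((continuousOn_const.mul
        (continuousOn_id.rpow_const fun x hx => Or.inl (hne x hx))).add
        continuousOn_const).sub
        (continuousOn_const.mul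
        (continuousOn_id.rpow_const fun x hx => Or.inl (hne x hx)))).sub
        (continuousOn_const.mul
        (continuousOn_id.rpow_const fun x hx => Or.inl (hne x hx))))
  have h0mem : (0 : ℝ) ∈ Set.Icc (g T₀) (g s₀) := ⟨hgT₀.le, hgs₀.le⟩
  obtain ⟨t₀, ht₀mem, hgt₀⟩ := intermediate_value_Icc' hsT hcontg h0mem
  have ht₀pos : 0 < t₀ := lt_of_lt_of_le hs₀pos ht₀mem.1
  -- strict anti of g
  have hanti : ∀ x y : ℝ, 0 < x → x < y → g y < g x := fun x y hx hxy =>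
    G_strictAnti hC₁ hC₃ hC₄ ha hb hx hxy (c₂ := C₂)
  refine ⟨t₀, ht₀pos, ?_, ?_, ?_⟩
  · rw [hderiv t₀ ht₀pos, hgt₀, mul_zero]
  · intro s hs hds
    rw [hderiv s hs] at hds
    have hs7 : (0 : ℝ) < s ^ (7 : ℕ) := pow_pos hs 7
    have hgs : g s = 0 := by
      rcases mul_eq_zero.mp hds with h | h
      · exact absurd h hs7.ne'
      · exact h
    rcases lt_trichotomy s t₀ with h | h | h
    · have := hanti s t₀ hs h; rw [hgs, hgt₀] at this; exact absurd this (lt_irrefl 0)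
    · exact h
    · have := hanti t₀ s ht₀pos h; rw [hgs, hgt₀] at this; exact absurd this (lt_irrefl 0)
  · intro s hs
    have hcontf : ∀ u : ℝ, 0 < u → ContinuousAt f u := fun u hu =>
      (hasDerivAt_auxf C₁ C₂ C₃ C₄ α p q u hu).continuousAt
    rcases le_total s t₀ with h | h
    · -- monotone on [s, t₀]
      have hmono : MonotoneOn f (Set.Icc s t₀) := by
        apply monotoneOn_of_deriv_nonneg (convex_Icc s t₀)
        · exact fun x hx => (hcontf x (lt_of_lt_of_le hs hx.1)).continuousWithinAt
        · intro x hx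
          rw [interior_Icc] at hx
          exact ((hasDerivAt_auxf C₁ C₂ C₃ C₄ α p q x
            (lt_of_lt_of_le hs hx.1.le)).differentiableAt).differentiableWithinAt
        · intro x hx
          rw [interior_Icc] at hx
          have hxpos : 0 < x := lt_trans hs hx.1
          rw [hderiv x hxpos]
          have : 0 < g x := by
            have := hanti x t₀ hxpos hx.2
            rw [hgt₀] at this; linarith
          positivity
      exact hmono (Set.left_mem_Icc.mpr h) (Set.right_mem_Icc.mpr h) h
    · -- antitone on [t₀, s]
      have hantif : AntitoneOn f (Set.Icc t₀ s) := by
        apply antitoneOn_of_deriv_nonpos (convex_Icc t₀ s)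
        · exact fun x hx => (hcontf x (lt_of_lt_of_le ht₀pos hx.1)).continuousWithinAt
        · intro x hx
          rw [interior_Icc] at hx
          exact ((hasDerivAt_auxf C₁ C₂ C₃ C₄ α p q x
            (lt_trans ht₀pos hx.1)).differentiableAt).differentiableWithinAt
        · intro x hx
          rw [interior_Icc] at hx
          have hxpos : 0 < x := lt_trans ht₀pos hx.1
          rw [hderiv x hxpos]
          have hgx : g x < 0 := by
            have := hanti t₀ x ht₀pos hx.1
            rw [hgt₀] at this; linarith
          have hx7 : (0 : ℝ) < x ^ (7 : ℕ) := pow_pos hxpos 7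
          nlinarith
      exact hantif (Set.left_mem_Icc.mpr h) (Set.right_mem_Icc.mpr h) h

end
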